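/- arXiv:2306.08597 — 2 statements merged into one kernel-verified Lean document; each statement's English description precedes it below -/
import Mathlib

section
/- Let w ∈ S_n be a vexillary permutation and let (i_1, j_1), (i_2, j_2) ∈ D(w) be two linked squares with i_1 < i_2. Then for every i' > i_2, (i', j_2) ∈ D(w) implies (i', j_1) ∈ D(w). -/
open MvPolynomial

noncomputable section

/-- The defining recursion for the family of Grothendieck polynomials of permutations of `Fin n`
(written with 0-based positions): `G w₀ = x₀^{n-1} x₁^{n-2} ⋯`, and whenever `w j < w (j+1)`,
`(x_j - x_{j+1}) * G w = f - s_j · f` where `f = (1 - x_{j+1}) * G (w s_j)`. -/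
def IsGrothendieck (n : ℕ) (G : Equiv.Perm (Fin n) → MvPolynomial (Fin n) ℤ) : Prop :=
  G Fin.revPerm = ∏ i : Fin n, X i ^ (n - 1 - (i : ℕ)) ∧
    ∀ (w : Equiv.Perm (Fin n)) (j j' : Fin n), (j : ℕ) + 1 = (j' : ℕ) → w j < w j' →
      (X j - X j') * G w =
        (1 - X j') * G (w * Equiv.swap j j') -
          rename (⇑(Equiv.swap j j')) ((1 - X j') * G (w * Equiv.swap j j'))

/-- `w` is vexillary: it avoids the pattern 2143. -/
def Vexillary {n : ℕ} (w : Equiv.Perm (Fin n)) : Prop :=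
  ¬∃ i j k l : Fin n, i < j ∧ j < k ∧ k < l ∧ w j < w i ∧ w i < w l ∧ w l < w k

/-- The Rothe diagram of `w`, as a set of (row, column) pairs with 1-based indexing:
`D(w) = {(i,j) : i < w⁻¹(j), j < w(i)}`. -/
def RotheDiagram (n : ℕ) (w : Equiv.Perm (Fin n)) : Finset (ℕ × ℕ) :=
  Finset.image (fun p : Fin n × Fin n => ((p.1 : ℕ) + 1, (p.2 : ℕ) + 1))
    (Finset.univ.filter fun p : Fin n × Fin n => p.1 < w.symm p.2 ∧ p.2 < w p.1)

/-- The rank function of the Rothe diagram: `r(i,j) = #{k < i : w(k) < j}` (1-based). -/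
def RotheRank (n : ℕ) (w : Equiv.Perm (Fin n)) (s : ℕ × ℕ) : ℤ :=
  ((Finset.univ.filter fun k : Fin n => (k : ℕ) + 1 < s.1 ∧ (w k : ℕ) + 1 < s.2).card : ℤ)

/-- Two squares are linked with respect to the Rothe rank function:
`i - i' = r(i,j) - r(i',j')`. -/
def RLinked (n : ℕ) (w : Equiv.Perm (Fin n)) (s t : ℕ × ℕ) : Prop :=
  (s.1 : ℤ) - (t.1 : ℤ) = RotheRank n w s - RotheRank n w t

/-- A bubbling diagram: a diagram `D` of squares (row ≥ 1, 1-based), a nonnegative rank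
function `r` and a set `F ⊆ D` of dead squares, such that every dead square has a live square
strictly above it in its column with the prescribed rank difference to the closest such, and
dead squares in the same row have distinct ranks. -/
structure BubblingDiagram where
  D : Finset (ℕ × ℕ)
  r : ℕ × ℕ → ℤ
  F : Finset (ℕ × ℕ)
  F_subset : F ⊆ D
  r_nonneg : ∀ s ∈ D, 0 ≤ r s
  dead_live_above : ∀ s ∈ F, ∃ i' < s.1, (i', s.2) ∈ D ∧ (i', s.2) ∉ F
  dead_rank : ∀ s ∈ F, ∀ i' < s.1, (i', s.2) ∈ D → (i', s.2) ∉ F →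
    (∀ i'', i' < i'' → i'' < s.1 → (i'', s.2) ∈ D → (i'', s.2) ∈ F) →
    r s - r (i', s.2) = (s.1 : ℤ) - (i' : ℤ)
  dead_distinct : ∀ s ∈ F, ∀ t ∈ F, s.1 = t.1 → s.2 ≠ t.2 → r s ≠ r t

/-- A bubbling move: a live square `(i,j)` with `(i-1,j)` empty moves up one row,
its rank decreasing by one. -/
def IsBubbleMove (B C : BubblingDiagram) : Prop :=
  ∃ i j : ℕ, 2 ≤ i ∧ (i, j) ∈ B.D ∧ (i, j) ∉ B.F ∧ (i - 1, j) ∉ B.D ∧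
    C.D = insert (i - 1, j) (B.D.erase (i, j)) ∧ C.F = B.F ∧
    C.r = Function.update B.r (i - 1, j) (B.r (i, j) - 1)

/-- A K-bubbling move: a live square `(i,j)` with `(i-1,j)` empty, and such that no dead square
in row `i` has the same rank as `(i,j)`, moves up one row (rank decreasing by one), leaving
behind a dead copy of itself. -/
def IsKBubbleMove (B C : BubblingDiagram) : Prop :=
  ∃ i j : ℕ, 2 ≤ i ∧ (i, j) ∈ B.D ∧ (i, j) ∉ B.F ∧ (i - 1, j) ∉ B.D ∧
    (∀ k : ℕ, (i, k) ∈ B.F → B.r (i, k) ≠ B.r (i, j)) ∧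
    C.D = insert (i - 1, j) B.D ∧ C.F = insert (i, j) B.F ∧
    C.r = Function.update B.r (i - 1, j) (B.r (i, j) - 1)

/-- `C ∈ BD(B)`: `C` is obtainable from `B` by finitely many bubbling and K-bubbling moves. -/
def InBD (B C : BubblingDiagram) : Prop :=
  Relation.ReflTransGen (fun P Q => IsBubbleMove P Q ∨ IsKBubbleMove P Q) B C

/-- The Rothe bubbling diagram `𝒟(w) = (D(w), r_{D(w)}, ∅)`. -/
def RotheBD (n : ℕ) (w : Equiv.Perm (Fin n)) : BubblingDiagram where
  D := RotheDiagram n w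
  r := RotheRank n w
  F := ∅
  F_subset := Finset.empty_subset _
  r_nonneg := fun _ _ => Int.natCast_nonneg _
  dead_live_above := by simp
  dead_rank := by simp
  dead_distinct := by simp

/-- The weight of a diagram: its `i`-th coordinate is the number of squares in row `i+1`
(1-based row `i+1` corresponds to `i : Fin n`). -/
def diagWt (n : ℕ) (D : Finset (ℕ × ℕ)) (i : Fin n) : ℕ :=
  (D.filter fun s => s.1 = (i : ℕ) + 1).card

/-- Gale order on finite sets of naturals: same cardinality, and the `m`-th smallest element
of `R` is at most the `m`-th smallest element of `S`, for every `m`. -/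
def galeLE (R S : Finset ℕ) : Prop :=
  R.card = S.card ∧ ∀ m < R.card, (R.sort (· ≤ ·)).getD m 0 ≤ (S.sort (· ≤ ·)).getD m 0

/-- Column `j` of a diagram: the set of rows of its squares in column `j`. -/
def diagCol (D : Finset (ℕ × ℕ)) (j : ℕ) : Finset ℕ :=
  (D.filter fun s => s.2 = j).image Prod.fst

/-- Columnwise Gale order on diagrams. -/
def diagLE (C D : Finset (ℕ × ℕ)) : Prop := ∀ j : ℕ, galeLE (diagCol C j) (diagCol D j)

/-- The diagram lies in the grid `[n] × [n]` (1-based). -/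
def InGrid (n : ℕ) (D : Finset (ℕ × ℕ)) : Prop :=
  ∀ s ∈ D, s.1 ∈ Finset.Icc 1 n ∧ s.2 ∈ Finset.Icc 1 n

/-- M-convexity of a set of lattice points. -/
def MConvex {m : ℕ} (S : Set (Fin m → ℤ)) : Prop :=
  ∀ x ∈ S, ∀ y ∈ S, ∀ i : Fin m, y i < x i →
    ∃ j : Fin m, x j < y j ∧ (x - Pi.single i 1 + Pi.single j 1) ∈ S ∧
      (y - Pi.single j 1 + Pi.single i 1) ∈ S

open Classical in
/-- The rank function of the Schubert matroid `SM_n(I)`: the bases are the `B ⊆ [n]` with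
`B ≤ I` in Gale order, and `rank J = max {#(J ∩ B) : B a basis}`. -/
def schubertRank (n : ℕ) (I J : Finset ℕ) : ℕ :=
  ((Finset.Icc 1 n).powerset.filter fun B => galeLE B I).sup fun B => (J ∩ B).card

/-- The Schubert matroid polytope `P(SM_n(I)) ⊆ ℝⁿ`: the convex hull of the 0/1 indicator
vectors of the bases of `SM_n(I)` (coordinate `i : Fin n` stands for the element `i+1`). -/
def schubertPolytope (n : ℕ) (I : Finset ℕ) : Set (Fin n → ℝ) :=
  convexHull ℝ {v | ∃ B : Finset ℕ, B ⊆ Finset.Icc 1 n ∧ galeLE B I ∧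
    v = fun i : Fin n => if (i : ℕ) + 1 ∈ B then (1 : ℝ) else 0}

/-- A Schubitope: a finite Minkowski sum of Schubert matroid polytopes of nonempty
subsets of `[n]`. -/
def IsSchubitope (n : ℕ) (P : Set (Fin n → ℝ)) : Prop :=
  ∃ (k : ℕ) (I : Fin k → Finset ℕ), (∀ j, (I j).Nonempty ∧ I j ⊆ Finset.Icc 1 n) ∧
    P = {x | ∃ p : Fin k → Fin n → ℝ, (∀ j, p j ∈ schubertPolytope n (I j)) ∧ x = ∑ j, p j}

/-- A generalized permutahedron: the polytope cut out by a submodular function `z`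
with `z(∅) = 0`. -/
def IsGenPermutahedron {m : ℕ} (P : Set (Fin m → ℝ)) : Prop :=
  ∃ z : Finset (Fin m) → ℝ, z ∅ = 0 ∧
    (∀ A B : Finset (Fin m), z (A ∪ B) + z (A ∩ B) ≤ z A + z B) ∧
    P = {t | (∀ A : Finset (Fin m), ∑ i ∈ A, t i ≤ z A) ∧ ∑ i, t i = z Finset.univ}

/-- The padding sets `S^{(k,s)}`: `S^{(0,s)} = S` and `S^{(k,s)}` is obtained from
`S^{(k-1,s)}` by inserting the largest `i ∈ [1, s)` not already present (when one exists). -/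
def pad (S : Finset ℕ) (s : ℕ) : ℕ → Finset ℕ
  | 0 => S
  | k + 1 =>
      if h : ((Finset.Ico 1 s).filter fun i => i ∉ pad S s k).Nonempty then
        insert (((Finset.Ico 1 s).filter fun i => i ∉ pad S s k).max' h) (pad S s k)
      else pad S s k

/-- `d = s - #{i ∈ S : i ≤ s}`. -/
def padDepth (S : Finset ℕ) (s : ℕ) : ℕ := s - (S.filter fun i => i ≤ s).card

/-- The order `I ≺ J`: `max (I \ J) ≤ max (J \ I)` (with the convention `max ∅ = 0`). -/
def maxPrec (I J : Finset ℕ) : Prop := (I \ J).sup id ≤ (J \ I).sup id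

/-- Rows of the live squares of column `j` of a bubbling diagram. -/
def liveCol (B : BubblingDiagram) (j : ℕ) : Finset ℕ :=
  ((B.D \ B.F).filter fun s => s.2 = j).image Prod.fst

/-- The row of the `a`-th highest live square of column `j` (`a` is 1-based; highest means
smallest row index). -/
def nthLiveRow (B : BubblingDiagram) (j a : ℕ) : ℕ :=
  ((liveCol B j).sort (· ≤ ·)).getD (a - 1) 0

/-- The number of squares of `D` strictly below `s` in its column. -/
def belowCount (D : Finset (ℕ × ℕ)) (s : ℕ × ℕ) : ℕ :=
  (D.filter fun t => t.2 = s.2 ∧ s.1 < t.1).card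

/-- The total order `≺` on the squares of a diagram: lower rows first; within a row, fewer
squares below first; ties broken by smaller column index. -/
def sqPrec (D : Finset (ℕ × ℕ)) (s t : ℕ × ℕ) : Prop :=
  t.1 < s.1 ∨ (s.1 = t.1 ∧ belowCount D s < belowCount D t) ∨
    (s.1 = t.1 ∧ belowCount D s = belowCount D t ∧ s.2 < t.2)

end

/-!
Work 0-based, with the squares `(i, j)`, `(a, b)` and `(c, b)`, `i < a < c`. Linkedness says
that the rank grows by exactly `a - i` from `(i, j)` to `(a, b)`; if no `k ≤ i` had
`j < w k < b`, every `k < a` with `w k < b` would either have `k < i` and `w k < j` or lie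
strictly between rows `i` and `a` (row `i` itself is excluded since `w i > j`), so the rank could
grow by at most `a - i - 1`. Given such a `k`, if `(c, j)` were not in `D(w)` then the positions
`k < w⁻¹ j < c < w⁻¹ b` would form a `2143` pattern.
-/
section

open Finset

variable {n : ℕ} {w : Equiv.Perm (Fin n)}

theorem mem_rotheDiagram_iff {a b : ℕ} :
    (a, b) ∈ RotheDiagram n w ↔
      ∃ i j : Fin n, i < w.symm j ∧ j < w i ∧ (i : ℕ) + 1 = a ∧ (j : ℕ) + 1 = b := by
  simp [RotheDiagram, and_assoc]

theorem rotheRank_succ_succ (a b : ℕ) :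
    RotheRank n w (a + 1, b + 1) = #{k : Fin n | (k : ℕ) < a ∧ (w k : ℕ) < b} := by
  simp [RotheRank]

theorem exists_le_lt_lt_of_rLinked {i j : Fin n} (hij : i < w.symm j) (hji : j < w i)
    {a : ℕ} {b : Fin n} (hia : (i : ℕ) < a) (hlink : RLinked n w (i + 1, j + 1) (a + 1, b + 1)) :
    ∃ k ≤ i, j < w k ∧ w k < b := by
  by_contra! hnone
  have hbelow : #{k : Fin n | (k : ℕ) < a ∧ (w k : ℕ) < b ∧ k ≤ i} ≤
      #{k : Fin n | (k : ℕ) < i ∧ w k < j} := by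
    refine card_le_card fun k hk => ?_
    simp only [mem_filter, mem_univ, true_and] at hk ⊢
    obtain ⟨-, hkb, hki⟩ := hk
    have hkj : w k ≤ j := not_lt.1 fun h => (hnone k hki h).not_gt (Fin.lt_def.2 hkb)
    have hkj' : w k ≠ j := fun h => (hki.trans_lt hij).ne (by rw [← h, Equiv.symm_apply_apply])
    have hki' : k ≠ i := by rintro rfl; exact hkj.not_gt hji
    exact ⟨Fin.lt_def.1 (lt_of_le_of_ne hki hki'), lt_of_le_of_ne hkj hkj'⟩
  have hbetween : #{k : Fin n | (k : ℕ) < a ∧ (w k : ℕ) < b ∧ ¬k ≤ i} ≤ a - i - 1 := by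
    calc #{k : Fin n | (k : ℕ) < a ∧ (w k : ℕ) < b ∧ ¬k ≤ i}
        ≤ #(Ioo (i : ℕ) a) := card_le_card_of_injOn Fin.val (fun k hk => by
          simp only [coe_filter, mem_univ, true_and, Set.mem_ofPred_eq] at hk
          simp only [coe_Ioo, Set.mem_Ioo]
          exact ⟨not_le.1 hk.2.2, hk.1⟩) Fin.val_injective.injOn
      _ = a - i - 1 := by simp
  have hsplit := card_filter_add_card_filter_not
    (s := {k : Fin n | (k : ℕ) < a ∧ (w k : ℕ) < b}) (p := fun k => k ≤ i)
  simp only [filter_filter, and_assoc] at hsplit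
  unfold RLinked at hlink
  rw [rotheRank_succ_succ, rotheRank_succ_succ] at hlink
  simp only [Fin.lt_def] at hbelow
  push_cast at hlink
  omega

theorem Vexillary.lt_symm_apply (hw : Vexillary w)
    {k c j b : Fin n} (hk : k < w.symm j) (hjk : j < w k) (hkb : w k < b)
    (hkc : k < c) (hcb : c < w.symm b) (hbc : b < w c) : c < w.symm j := by
  by_contra! hjc
  have hjc' : w.symm j ≠ c := by
    rintro rfl
    rw [Equiv.apply_symm_apply] at hbc
    exact (hjk.trans hkb).not_gt hbc
  exact hw ⟨k, w.symm j, c, w.symm b, hk, lt_of_le_of_ne hjc hjc', hcb,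
    by rwa [Equiv.apply_symm_apply], by rwa [Equiv.apply_symm_apply],
    by rwa [Equiv.apply_symm_apply]⟩

end

theorem stmt_13_general (n : ℕ) (w : Equiv.Perm (Fin n)) (hw : Vexillary w)
    (i1 j1 i2 j2 : ℕ) (h1 : (i1, j1) ∈ RotheDiagram n w)
    (hlink : RLinked n w (i1, j1) (i2, j2)) (hi : i1 < i2) :
    ∀ i' > i2, (i', j2) ∈ RotheDiagram n w → (i', j1) ∈ RotheDiagram n w := by
  intro i' hi' h'
  obtain ⟨a1, b1, ha1, hb1, rfl, rfl⟩ := mem_rotheDiagram_iff.1 h1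
  obtain ⟨c, b, hc, hb, rfl, rfl⟩ := mem_rotheDiagram_iff.1 h'
  obtain ⟨a, rfl⟩ : ∃ a, i2 = a + 1 := ⟨i2 - 1, by omega⟩
  obtain ⟨k, hka, hbk, hkb⟩ := exists_le_lt_lt_of_rLinked ha1 hb1 (by omega) hlink
  have hkc : k < c := Fin.lt_def.2 (by omega)
  exact mem_rotheDiagram_iff.2 ⟨c, b1, hw.lt_symm_apply (hka.trans_lt ha1) hbk hkb hkc hc hb,
    hbk.trans (hkb.trans hb), rfl, rfl⟩

theorem stmt_13 (n : ℕ) (w : Equiv.Perm (Fin n)) (hw : Vexillary w)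
    (i1 j1 i2 j2 : ℕ) (h1 : (i1, j1) ∈ RotheDiagram n w) (h2 : (i2, j2) ∈ RotheDiagram n w)
    (hlink : RLinked n w (i1, j1) (i2, j2)) (hi : i1 < i2) :
    ∀ i' > i2, (i', j2) ∈ RotheDiagram n w → (i', j1) ∈ RotheDiagram n w :=
  stmt_13_general n w hw i1 j1 i2 j2 h1 hlink hi
end

section
/- Let w ∈ S_n be a vexillary permutation, let (i_1, j_1), (i_2, j_2) ∈ D(w) be two linked squares with j_1 < j_2, and let i_1' ≤ i_1 be minimal such that (i, j_1) ∈ D(w) for all i with i_1' ≤ i ≤ i_1. Then there are exactly i_1 − i_1' indices k with i_1' ≤ k < i_2 and (k, j_2) ∈ D(w); furthermore, writing these indices as k_1 < … < k_{i_1 − i_1'}, the square (k_m, j_2) is linked to (i_1' + m − 1, j_1) for every m ∈ [i_1 − i_1']. -/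
open MvPolynomial

/-! Write `RotheCorank n w i j = #{k < i : w(k) > j}`. For a square `(i, j)` of `D(w)` no row
`k < i` has `w(k) = j`, so `r(i, j) = i - 1 - RotheCorank n w i j`, and two squares of `D(w)` are
linked iff their coranks agree. For squares `(a, j)`, `(b, j)` with `a ≤ b` and `(b, j) ∈ D(w)`, the
corank grows from `a` to `b` by the number of squares of `D(w)` in rows `[a, b)` of column `j`;
along the segment `[i₁', i₁]` of column `j₁` it therefore grows by one per row. At the top of that
segment the coranks in columns `j₁` and `j₂` agree: a row `k < i₁'` with `j₁ < w(k) < j₂`, the row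
`i₁' - 1` (where `w < j₁`), the row `i₂` and the row `w⁻¹(j₂)` would form a 2143 pattern. Comparing
coranks then gives both claims; if `i₂ < i₁'`, monotonicity of the corank forces `i₁ = i₁'`. -/

open Finset

theorem Finset.sort_getD_eq_nth (K : Finset ℕ) (m : ℕ) :
    (K.sort (· ≤ ·)).getD m 0 = Nat.nth (· ∈ K) m := by
  have hf : (Set.ofPred (· ∈ K)).Finite := K.finite_toSet
  rw [Nat.nth_eq_getD_sort hf]
  congr
  ext; simp

theorem Finset.sort_getD_mem {K : Finset ℕ} {m : ℕ} (hm : m < #K) :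
    (K.sort (· ≤ ·)).getD m 0 ∈ K := by
  have hf : (Set.ofPred (· ∈ K)).Finite := K.finite_toSet
  rw [K.sort_getD_eq_nth]
  exact Nat.nth_mem_of_lt_card hf (by convert hm; ext; simp)

theorem Finset.card_filter_lt_sort_getD {K : Finset ℕ} {m : ℕ} (hm : m < #K) :
    #{x ∈ K | x < (K.sort (· ≤ ·)).getD m 0} = m := by
  have hf : (Set.ofPred (· ∈ K)).Finite := K.finite_toSet
  conv_rhs => rw [← Nat.count_nth_of_lt_card_finite (n := m) hf (by convert hm; ext; simp)]
  rw [K.sort_getD_eq_nth, Nat.count_eq_card_filter_range]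
  congr 1
  ext x
  simp [and_comm]

theorem Equiv.apply_ne_of_lt_symm_apply {α β : Type*} [Preorder α] (e : α ≃ β) {a : α} {b : β}
    (h : a < e.symm b) : e a ≠ b :=
  fun hab => h.ne (e.eq_symm_apply.mpr hab)

def RotheCorank (n : ℕ) (w : Equiv.Perm (Fin n)) (i j : ℕ) : ℕ :=
  #{k : Fin n | (k : ℕ) + 1 < i ∧ j < (w k : ℕ) + 1}

section Rothe

variable {n : ℕ} {w : Equiv.Perm (Fin n)}

theorem mem_rotheDiagram {i j : ℕ} :
    (i, j) ∈ RotheDiagram n w ↔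
      ∃ p q : Fin n, (p : ℕ) + 1 = i ∧ (q : ℕ) + 1 = j ∧ p < w.symm q ∧ q < w p := by
  simp only [RotheDiagram, mem_image, mem_filter, mem_univ, true_and, Prod.mk.injEq,
    Prod.exists]
  constructor
  · rintro ⟨p, q, ⟨hp, hq⟩, rfl, rfl⟩; exact ⟨p, q, rfl, rfl, hp, hq⟩
  · rintro ⟨p, q, rfl, rfl, hp, hq⟩; exact ⟨p, q, ⟨hp, hq⟩, rfl, rfl⟩

theorem one_le_of_mem_rotheDiagram {i j : ℕ} (h : (i, j) ∈ RotheDiagram n w) : 1 ≤ i := by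
  obtain ⟨p, q, rfl, -⟩ := mem_rotheDiagram.mp h
  omega

theorem rotheRank_eq_sub_rotheCorank {i j : ℕ} (h : (i, j) ∈ RotheDiagram n w) :
    RotheRank n w (i, j) = (i : ℤ) - 1 - RotheCorank n w i j := by
  obtain ⟨p, q, rfl, rfl, hp, -⟩ := mem_rotheDiagram.mp h
  have hsplit := card_filter_add_card_filter_not (s := Iio p) fun k => w k < q
  rw [Fin.card_Iio] at hsplit
  have hlt : RotheRank n w (p + 1, q + 1) = #{k ∈ Iio p | w k < q} := by
    unfold RotheRank
    congr 2
    ext k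
    simp only [mem_filter, mem_univ, true_and, mem_Iio]
    omega
  have hgt : RotheCorank n w (p + 1) (q + 1) = #{k ∈ Iio p | ¬w k < q} := by
    unfold RotheCorank
    congr 1
    ext k
    simp only [mem_filter, mem_univ, true_and, mem_Iio]
    have := fun hk : k < p => w.apply_ne_of_lt_symm_apply (hk.trans hp)
    omega
  rw [hlt, hgt]
  push_cast
  omega

theorem rLinked_iff_rotheCorank_eq {i j i' j' : ℕ} (h : (i, j) ∈ RotheDiagram n w)
    (h' : (i', j') ∈ RotheDiagram n w) :
    RLinked n w (i, j) (i', j') ↔ RotheCorank n w i j = RotheCorank n w i' j' := by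
  rw [RLinked, rotheRank_eq_sub_rotheCorank h, rotheRank_eq_sub_rotheCorank h']
  omega

theorem rotheCorank_le_rotheCorank {i i' j j' : ℕ} (hi : i ≤ i') (hj : j' ≤ j) :
    RotheCorank n w i j ≤ RotheCorank n w i' j' :=
  card_le_card <| monotone_filter_right _ fun k _ hk => ⟨by omega, by omega⟩

theorem card_filter_mem_rotheDiagram_Ico_add_rotheCorank {a b j : ℕ}
    (hb : (b, j) ∈ RotheDiagram n w) (hab : a ≤ b) :
    #{x ∈ Ico a b | (x, j) ∈ RotheDiagram n w} + RotheCorank n w a j = RotheCorank n w b j := by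
  obtain ⟨p, q, rfl, rfl, hp, -⟩ := mem_rotheDiagram.mp hb
  unfold RotheCorank
  have hsplit := card_filter_add_card_filter_not
    (s := {k : Fin n | (k : ℕ) + 1 < p + 1 ∧ q + 1 < (w k : ℕ) + 1}) fun k => a ≤ (k : ℕ) + 1
  rw [filter_filter, filter_filter] at hsplit
  rw [← hsplit]
  congr 1
  · symm
    refine card_bij (fun k _ => (k : ℕ) + 1) ?_ ?_ ?_
    · intro k hk
      simp only [mem_filter, mem_univ, true_and, mem_Ico] at hk ⊢
      exact ⟨⟨hk.2, by omega⟩, mem_rotheDiagram.mpr ⟨k, q, rfl, rfl, by omega, by omega⟩⟩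
    · intro k _ k' _ h
      exact Fin.ext (by omega)
    · intro x hx
      simp only [mem_filter, mem_Ico] at hx
      obtain ⟨⟨hax, hxb⟩, hx⟩ := hx
      obtain ⟨k, q', rfl, hq', -, hk⟩ := mem_rotheDiagram.mp hx
      exact ⟨k, by simp only [mem_filter, mem_univ, true_and]; omega, rfl⟩
  · congr 1
    ext k
    simp only [mem_filter, mem_univ, true_and]
    omega

theorem rotheCorank_add_of_forall_mem {a m j : ℕ}
    (h : ∀ i, a ≤ i → i ≤ a + m → (i, j) ∈ RotheDiagram n w) :
    RotheCorank n w (a + m) j = RotheCorank n w a j + m := by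
  have hcol := card_filter_mem_rotheDiagram_Ico_add_rotheCorank
    (h (a + m) (by omega) le_rfl) (Nat.le_add_right a m)
  rw [filter_true_of_mem fun x hx => by rw [mem_Ico] at hx; exact h x hx.1 hx.2.le,
    Nat.card_Ico, Nat.add_sub_cancel_left] at hcol
  omega

theorem rotheCorank_sort_getD {a b j m : ℕ}
    (hm : m < #{x ∈ Ico a b | (x, j) ∈ RotheDiagram n w}) :
    RotheCorank n w (({x ∈ Ico a b | (x, j) ∈ RotheDiagram n w}.sort (· ≤ ·)).getD m 0) j =
      RotheCorank n w a j + m := by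
  have hkK := sort_getD_mem hm
  have hcount := card_filter_lt_sort_getD hm
  generalize ({x ∈ Ico a b | (x, j) ∈ RotheDiagram n w}.sort (· ≤ ·)).getD m 0 = k
    at hkK hcount ⊢
  obtain ⟨hk, hkD⟩ := mem_filter.mp hkK
  rw [mem_Ico] at hk
  have hk_col : #{x ∈ Ico a k | (x, j) ∈ RotheDiagram n w} = m := by
    rw [← hcount, filter_filter]
    congr 1
    ext x
    simp only [mem_filter, mem_Ico]
    grind
  have := card_filter_mem_rotheDiagram_Ico_add_rotheCorank hkD hk.1
  omega

theorem rotheCorank_eq_of_vexillary (hw : Vexillary w) {a c j j' : ℕ}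
    (ha : (a, j) ∈ RotheDiagram n w) (ha' : (a - 1, j) ∉ RotheDiagram n w)
    (hc : (c, j') ∈ RotheDiagram n w) (hac : a ≤ c) (hj : j < j') :
    RotheCorank n w a j = RotheCorank n w a j' := by
  obtain ⟨pa, q, rfl, rfl, hpa, -⟩ := mem_rotheDiagram.mp ha
  obtain ⟨pc, q', rfl, rfl, hpc, hq'⟩ := mem_rotheDiagram.mp hc
  unfold RotheCorank
  congr 1
  refine filter_congr fun k _ => and_congr_right fun hk => ⟨fun hwk => ?_, by omega⟩
  by_contra hwk'
  obtain ⟨b, hb⟩ : ∃ b : Fin n, (b : ℕ) + 1 = pa := ⟨⟨pa - 1, by omega⟩, by simp; omega⟩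
  have hwb : w b < q := by
    have hbq : ¬q < w b := fun h =>
      ha' (mem_rotheDiagram.mpr ⟨b, q, by omega, rfl, by omega, h⟩)
    have := w.apply_ne_of_lt_symm_apply (show b < w.symm q by omega)
    omega
  have hkb : k < b := lt_of_le_of_ne (by omega) (by rintro rfl; omega)
  have hkq' := w.apply_ne_of_lt_symm_apply (show k < w.symm q' by omega)
  exact hw ⟨k, b, pc, w.symm q', hkb, by omega, hpc, by omega, by simp; omega, by simpa⟩

end Rothe

theorem stmt_15 (n : ℕ) (w : Equiv.Perm (Fin n)) (hw : Vexillary w)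
    (i1 j1 i2 j2 : ℕ) (h1 : (i1, j1) ∈ RotheDiagram n w) (h2 : (i2, j2) ∈ RotheDiagram n w)
    (hlink : RLinked n w (i1, j1) (i2, j2)) (hj : j1 < j2)
    (i1' : ℕ) (hle : i1' ≤ i1)
    (hseg : ∀ i, i1' ≤ i → i ≤ i1 → (i, j1) ∈ RotheDiagram n w)
    (hmin : ∀ i'', (∀ i, i'' ≤ i → i ≤ i1 → (i, j1) ∈ RotheDiagram n w) → i1' ≤ i'') :
    ((Finset.Ico i1' i2).filter fun x => (x, j2) ∈ RotheDiagram n w).card = i1 - i1' ∧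
      ∀ m < ((Finset.Ico i1' i2).filter fun x => (x, j2) ∈ RotheDiagram n w).card,
        RLinked n w
          ((((Finset.Ico i1' i2).filter fun x =>
              (x, j2) ∈ RotheDiagram n w).sort (· ≤ ·)).getD m 0, j2)
          (i1' + m, j1) := by
  set K := (Finset.Ico i1' i2).filter fun x => (x, j2) ∈ RotheDiagram n w
  have hcorank := (rLinked_iff_rotheCorank_eq h1 h2).mp hlink
  have hseg_corank (m : ℕ) (hm : m ≤ i1 - i1') :
      RotheCorank n w (i1' + m) j1 = RotheCorank n w i1' j1 + m :=
    rotheCorank_add_of_forall_mem fun i hi hi' => hseg i hi (by omega)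
  have hi1 := hseg_corank (i1 - i1') le_rfl
  rw [Nat.add_sub_cancel' hle] at hi1
  rcases le_or_gt i1' i2 with hi | hi
  · have htop : (i1' - 1, j1) ∉ RotheDiagram n w := fun h => by
      have := hmin (i1' - 1) fun i hi hi' => by
        rcases hi.eq_or_lt with rfl | hi
        exacts [h, hseg i (by omega) hi']
      have := one_le_of_mem_rotheDiagram (hseg i1' le_rfl hle)
      omega
    have htop_corank := rotheCorank_eq_of_vexillary hw (hseg i1' le_rfl hle) htop h2 hi hj
    have hK : #K + RotheCorank n w i1' j2 = RotheCorank n w i2 j2 :=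
      card_filter_mem_rotheDiagram_Ico_add_rotheCorank h2 hi
    refine ⟨by omega, fun m hm => ?_⟩
    have hkD := (mem_filter.mp (sort_getD_mem hm)).2
    rw [rLinked_iff_rotheCorank_eq hkD (hseg _ (by omega) (by omega)), rotheCorank_sort_getD hm,
      hseg_corank m (by omega)]
    omega
  · have hmono := rotheCorank_le_rotheCorank (w := w) hi.le hj.le
    have hK : K = ∅ := filter_eq_empty_iff.mpr fun x hx => by simp at hx; omega
    rw [hK, card_empty]
    exact ⟨by omega, fun m hm => absurd hm m.not_lt_zero⟩
end
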